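/- Let W : [0,1]² → {0,1} be measurable whose support has boundary of upper box-counting dimension γ < 2. Then for every ε > 0 there exists N₀ such that for all n ≥ N₀ and every p ≥ 1, ‖W − Wⁿ‖_{Lᵖ([0,1]²)} ≤ n^{(−2+γ+ε)/p}, where Wⁿ is the L²-projection of W onto piecewise constant functions on the uniform n×n grid. -/

import Mathlib

open MeasureTheory Set Filter

def gridCell (n : ℕ) (i j : Fin n) : Set (ℝ × ℝ) :=
  Ico ((i : ℝ) / n) (((i : ℝ) + 1) / n) ×ˢ Ico ((j : ℝ) / n) (((j : ℝ) + 1) / n)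

noncomputable def gridProj (n : ℕ) (W : ℝ × ℝ → ℝ) : ℝ × ℝ → ℝ := fun z =>
  ∑ i : Fin n, ∑ j : Fin n,
    (gridCell n i j).indicator (fun _ => ⨍ y in gridCell n i j, W y) z

open scoped Classical in
/-- Number of `n⁻¹`-grid cells of `[0,1]²` meeting the set `S`. -/
noncomputable def gridCount (S : Set (ℝ × ℝ)) (n : ℕ) : ℕ :=
  (Finset.univ.filter (fun ij : Fin n × Fin n =>
    (gridCell n ij.1 ij.2 ∩ S).Nonempty)).card

/-- Upper box-counting dimension of `S ⊂ [0,1]²` via grid counts. -/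
noncomputable def upperBoxDim (S : Set (ℝ × ℝ)) : ℝ :=
  limsup (fun n : ℕ => Real.log (gridCount S n) / Real.log n) atTop

/-! ### Auxiliary lemmas -/

lemma measurableSet_gridCell (n : ℕ) (i j : Fin n) : MeasurableSet (gridCell n i j) :=
  measurableSet_Ico.prod measurableSet_Ico

lemma gridCell_volume {n : ℕ} (hn : 0 < n) (i j : Fin n) :
    volume (gridCell n i j) = ENNReal.ofReal ((n : ℝ)⁻¹) * ENNReal.ofReal ((n : ℝ)⁻¹) := by
  have hn' : (0:ℝ) < n := by exact_mod_cast hn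
  rw [gridCell, Measure.volume_eq_prod, Measure.prod_prod, Real.volume_Ico, Real.volume_Ico]
  have h1 : ((i : ℝ) + 1) / n - (i : ℝ) / n = (n : ℝ)⁻¹ := by field_simp; ring
  have h2 : ((j : ℝ) + 1) / n - (j : ℝ) / n = (n : ℝ)⁻¹ := by field_simp; ring
  rw [h1, h2]

lemma gridCell_volume_toReal {n : ℕ} (hn : 0 < n) (i j : Fin n) :
    (volume (gridCell n i j)).toReal = (n : ℝ)⁻¹ * (n : ℝ)⁻¹ := by
  have hn' : (0:ℝ) < n := by exact_mod_cast hn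
  rw [gridCell_volume hn, ENNReal.toReal_mul, ENNReal.toReal_ofReal (by positivity)]

lemma gridCell_volume_pos {n : ℕ} (hn : 0 < n) (i j : Fin n) :
    0 < (volume (gridCell n i j)).toReal := by
  have hn' : (0:ℝ) < n := by exact_mod_cast hn
  rw [gridCell_volume_toReal hn]
  positivity

lemma gridCell_volume_ne_top {n : ℕ} (hn : 0 < n) (i j : Fin n) :
    volume (gridCell n i j) ≠ ⊤ := by
  rw [gridCell_volume hn]
  exact ENNReal.mul_ne_top ENNReal.ofReal_ne_top ENNReal.ofReal_ne_top

lemma gridCell_volume_ne_zero {n : ℕ} (hn : 0 < n) (i j : Fin n) :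
    volume (gridCell n i j) ≠ 0 := by
  intro h
  have := gridCell_volume_pos hn i j
  rw [h] at this
  simp at this

/-- Uniqueness of the interval containing a point. -/
lemma interval_unique {n : ℕ} {i i' : Fin n} {x : ℝ}
    (h : x ∈ Ico ((i : ℝ) / n) (((i : ℝ) + 1) / n))
    (h' : x ∈ Ico ((i' : ℝ) / n) (((i' : ℝ) + 1) / n)) : i = i' := by
  have hn' : (0:ℝ) < n := by exact_mod_cast i.pos
  have h1 : ((i : ℝ)) / n < ((i' : ℝ) + 1) / n := lt_of_le_of_lt h.1 h'.2
  have h2 : ((i' : ℝ)) / n < ((i : ℝ) + 1) / n := lt_of_le_of_lt h'.1 h.2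
  have h1' : (i : ℝ) < (i' : ℝ) + 1 := by
    have := (div_lt_div_iff_of_pos_right hn').mp h1; linarith [this]
  have h2' : (i' : ℝ) < (i : ℝ) + 1 := by
    have := (div_lt_div_iff_of_pos_right hn').mp h2; linarith [this]
  have hi1 : (i : ℕ) < (i' : ℕ) + 1 := by exact_mod_cast h1'
  have hi2 : (i' : ℕ) < (i : ℕ) + 1 := by exact_mod_cast h2'
  exact Fin.ext (by omega)

lemma exists_interval {n : ℕ} (hn : 0 < n) {x : ℝ} (hx : x ∈ Ico (0:ℝ) 1) :
    ∃ i : Fin n, x ∈ Ico ((i : ℝ) / n) (((i : ℝ) + 1) / n) := by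
  have hn' : (0:ℝ) < n := by exact_mod_cast hn
  have h0 : (0:ℝ) ≤ x * n := mul_nonneg hx.1 hn'.le
  have h1 : x * n < n := by nlinarith [hx.2]
  have hfl0 : 0 ≤ ⌊x * n⌋ := Int.floor_nonneg.mpr h0
  have hfln : ⌊x * n⌋ < (n : ℤ) := Int.floor_lt.mpr (by exact_mod_cast h1)
  refine ⟨⟨⌊x * n⌋.toNat, by omega⟩, ?_, ?_⟩
  · rw [div_le_iff₀ hn']
    have : ((⌊x * n⌋.toNat : ℕ) : ℝ) = ((⌊x * n⌋ : ℤ) : ℝ) := by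
      exact_mod_cast congrArg (fun k : ℤ => (k : ℝ)) (Int.toNat_of_nonneg hfl0)
    simp only [this]
    exact Int.floor_le (x * n)
  · rw [lt_div_iff₀ hn']
    have : ((⌊x * n⌋.toNat : ℕ) : ℝ) = ((⌊x * n⌋ : ℤ) : ℝ) := by
      exact_mod_cast congrArg (fun k : ℤ => (k : ℝ)) (Int.toNat_of_nonneg hfl0)
    simp only [this]
    exact Int.lt_floor_add_one (x * n)

lemma gridCell_unique {n : ℕ} {i j i' j' : Fin n} {z : ℝ × ℝ}
    (h : z ∈ gridCell n i j) (h' : z ∈ gridCell n i' j') : i = i' ∧ j = j' :=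
  ⟨interval_unique h.1 h'.1, interval_unique h.2 h'.2⟩

lemma exists_gridCell {n : ℕ} (hn : 0 < n) {z : ℝ × ℝ}
    (hz : z ∈ Ico (0:ℝ) 1 ×ˢ Ico (0:ℝ) 1) :
    ∃ i j : Fin n, z ∈ gridCell n i j := by
  obtain ⟨i, hi⟩ := exists_interval hn hz.1
  obtain ⟨j, hj⟩ := exists_interval hn hz.2
  exact ⟨i, j, hi, hj⟩

/-- `gridProj` evaluated inside a cell is the corresponding average. -/
lemma gridProj_eq_avg {n : ℕ} (W : ℝ × ℝ → ℝ) {i j : Fin n} {z : ℝ × ℝ}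
    (hz : z ∈ gridCell n i j) :
    gridProj n W z = ⨍ y in gridCell n i j, W y := by
  unfold gridProj
  rw [Finset.sum_eq_single i]
  · rw [Finset.sum_eq_single j]
    · exact indicator_of_mem hz _
    · intro b _ hb
      exact indicator_of_notMem (fun hzb => hb ((gridCell_unique hz hzb).2.symm)) _
    · intro h; exact absurd (Finset.mem_univ j) h
  · intro a _ ha
    apply Finset.sum_eq_zero
    intro b _
    exact indicator_of_notMem (fun hzb => ha ((gridCell_unique hz hzb).1.symm)) _
  · intro h; exact absurd (Finset.mem_univ i) h

lemma measurable_gridProj (n : ℕ) (W : ℝ × ℝ → ℝ) : Measurable (gridProj n W) := by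
  unfold gridProj
  exact Finset.measurable_sum _ fun i _ => Finset.measurable_sum _ fun j _ =>
    (measurable_const.indicator (measurableSet_gridCell n i j))

lemma W_integrableOn_cell {n : ℕ} (hn : 0 < n) {W : ℝ × ℝ → ℝ} (hW : Measurable W)
    (hvals : ∀ z, W z = 0 ∨ W z = 1) (i j : Fin n) :
    IntegrableOn W (gridCell n i j) volume := by
  refine Measure.integrableOn_of_bounded (gridCell_volume_ne_top hn i j)
    hW.aestronglyMeasurable (M := 1) ?_
  filter_upwards with z
  rcases hvals z with h | h <;> simp [h]

lemma avg_mem_Icc {n : ℕ} (hn : 0 < n) {W : ℝ × ℝ → ℝ} (hW : Measurable W)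
    (hvals : ∀ z, W z = 0 ∨ W z = 1) (i j : Fin n) :
    (⨍ y in gridCell n i j, W y) ∈ Icc (0:ℝ) 1 := by
  have hV : 0 < (volume (gridCell n i j)).toReal := gridCell_volume_pos hn i j
  rw [setAverage_eq]
  constructor
  · apply smul_nonneg (inv_nonneg.mpr hV.le)
    exact setIntegral_nonneg (measurableSet_gridCell n i j)
      (fun z _ => by rcases hvals z with h | h <;> simp [h])
  · have hle : ∫ y in gridCell n i j, W y ≤ ∫ _y in gridCell n i j, (1:ℝ) := by
      refine setIntegral_mono_on (W_integrableOn_cell hn hW hvals i j)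
        (integrableOn_const (gridCell_volume_ne_top hn i j))
        (measurableSet_gridCell n i j) (fun z _ => by rcases hvals z with h | h <;> simp [h])
    rw [smul_eq_mul]
    have h1 : ∫ _y in gridCell n i j, (1:ℝ) = (volume (gridCell n i j)).toReal := by
      simp [Measure.restrict_apply]; rfl
    calc (volume (gridCell n i j)).toReal⁻¹ * ∫ y in gridCell n i j, W y
        ≤ (volume (gridCell n i j)).toReal⁻¹ * (volume (gridCell n i j)).toReal := by
          apply mul_le_mul_of_nonneg_left _ (inv_nonneg.mpr hV.le)
          rw [← h1]; exact hle
      _ = 1 := inv_mul_cancel₀ hV.ne'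

/-- On a cell not meeting the frontier of the support, `W` is constant. -/
lemma W_const_on_good_cell {W : ℝ × ℝ → ℝ} (hvals : ∀ z, W z = 0 ∨ W z = 1)
    {n : ℕ} {i j : Fin n}
    (hgood : ¬(gridCell n i j ∩ frontier (Function.support W)).Nonempty) :
    ∀ z ∈ gridCell n i j, ∀ w ∈ gridCell n i j, W z = W w := by
  set S := Function.support W with hS
  have hconv : Convex ℝ (gridCell n i j) := (convex_Ico _ _).prod (convex_Ico _ _)
  have hsub : gridCell n i j ⊆ interior S ∪ interior Sᶜ := by
    intro z hz
    have hzf : z ∉ frontier S := fun hf => hgood ⟨z, hz, hf⟩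
    by_cases hc : z ∈ interior S
    · exact Or.inl hc
    · right
      rw [interior_compl, mem_compl_iff]
      intro hcl
      refine hzf ?_
      rw [frontier_eq_closure_inter_closure]
      exact ⟨hcl, by rw [closure_compl]; exact hc⟩
  have := hconv.isPreconnected.subset_or_subset isOpen_interior isOpen_interior
    (disjoint_left.mpr fun z hz hz' =>
      absurd (interior_subset hz : z ∈ S) (interior_subset hz' : z ∈ Sᶜ)) hsub
  rcases this with h | h
  · intro z hz w hw
    have hz1 : W z ≠ 0 := interior_subset (h hz)
    have hw1 : W w ≠ 0 := interior_subset (h hw)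
    rcases hvals z with h0 | h1
    · exact absurd h0 hz1
    rcases hvals w with h0 | h1'
    · exact absurd h0 hw1
    rw [h1, h1']
  · intro z hz w hw
    have hz1 : W z = 0 := by
      have : z ∈ Sᶜ := interior_subset (h hz)
      simpa [hS, Function.mem_support, not_not] using this
    have hw1 : W w = 0 := by
      have : w ∈ Sᶜ := interior_subset (h hw)
      simpa [hS, Function.mem_support, not_not] using this
    rw [hz1, hw1]

lemma avg_eq_of_const {n : ℕ} (hn : 0 < n) {W : ℝ × ℝ → ℝ} {i j : Fin n} {c : ℝ}
    (hc : ∀ z ∈ gridCell n i j, W z = c) :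
    (⨍ y in gridCell n i j, W y) = c := by
  have h1 : (⨍ y in gridCell n i j, W y) = ⨍ _y in gridCell n i j, c := by
    apply average_congr
    rw [EventuallyEq, ae_restrict_iff' (measurableSet_gridCell n i j)]
    filter_upwards with z hz using hc z hz
  rw [h1, setAverage_const (gridCell_volume_ne_zero hn i j) (gridCell_volume_ne_top hn i j)]


/-- if the boundary of the support of the `{0,1}`-valued kernel `W`
has upper box-counting dimension `γ < 2`, then for every `ε > 0` there is `N₀`
such that for all `n ≥ N₀` and all `p ≥ 1`,
`‖W − Wⁿ‖_{Lᵖ([0,1]²)} ≤ n^{(−2+γ+ε)/p}`. -/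
theorem stmt1 (W : ℝ × ℝ → ℝ) (hW : Measurable W) (hvals : ∀ z, W z = 0 ∨ W z = 1)
    (γ : ℝ) (hγ : upperBoxDim (frontier (Function.support W)) = γ) (hγ2 : γ < 2) :
    ∀ ε > 0, ∃ N₀ : ℕ, ∀ n ≥ N₀, ∀ p : ℝ, 1 ≤ p →
      (∫ z in Ico (0:ℝ) 1 ×ˢ Ico (0:ℝ) 1, |W z - gridProj n W z| ^ p ∂volume) ^ (1 / p)
        ≤ (n : ℝ) ^ ((-2 + γ + ε) / p) := by
  classical
  intro ε hε
  set F := frontier (Function.support W) with hF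
  -- boundedness of the sequence defining the dimension
  have hbdd : ∀ m : ℕ, Real.log (gridCount F m) / Real.log m ≤ 2 := by
    intro m
    rcases le_or_gt (Real.log m) 0 with h | h
    · have h0 : (0:ℝ) ≤ Real.log m := by
        rcases Nat.eq_zero_or_pos m with hm | hm
        · simp [hm]
        · have : (1:ℝ) ≤ (m:ℝ) := by exact_mod_cast hm
          exact Real.log_nonneg this
      have : Real.log m = 0 := le_antisymm h h0
      rw [this, div_zero]; norm_num
    · rcases Nat.eq_zero_or_pos (gridCount F m) with hN | hN
      · rw [hN]; simp
      · have hcard : gridCount F m ≤ m * m := by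
          unfold gridCount
          calc (Finset.univ.filter _).card ≤ (Finset.univ : Finset (Fin m × Fin m)).card :=
                Finset.card_filter_le _ _
            _ = m * m := by simp
        have hlogN : Real.log (gridCount F m) ≤ 2 * Real.log m := by
          have h1 : (gridCount F m : ℝ) ≤ (m:ℝ) * m := by exact_mod_cast hcard
          have h2 : Real.log (gridCount F m) ≤ Real.log ((m:ℝ) * m) :=
            Real.log_le_log (by exact_mod_cast hN) h1
          have hm1 : (m:ℝ) ≠ 0 := by
            intro hm; rw [hm, Real.log_zero] at h; exact absurd h (lt_irrefl 0)
          rw [Real.log_mul hm1 hm1] at h2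
          linarith
        rw [div_le_iff₀ h]
        linarith
  have hlimsup : limsup (fun m : ℕ => Real.log (gridCount F m) / Real.log m) atTop < γ + ε := by
    rw [← upperBoxDim, hγ]; linarith
  have hev : ∀ᶠ m in atTop, Real.log (gridCount F m) / Real.log m < γ + ε :=
    eventually_lt_of_limsup_lt hlimsup (isBoundedUnder_of ⟨2, hbdd⟩)
  obtain ⟨N₁, hN₁⟩ := eventually_atTop.mp hev
  refine ⟨max N₁ 2, fun n hn p hp => ?_⟩
  have hn2 : 2 ≤ n := le_trans (le_max_right _ _) hn
  have hnpos : 0 < n := by omega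
  have hn' : (0:ℝ) < n := by exact_mod_cast hnpos
  have hn1 : (1:ℝ) < n := by exact_mod_cast (by omega : 1 < n)
  have hp0 : (0:ℝ) < p := lt_of_lt_of_le one_pos hp
  -- grid count bound
  have hcount : (gridCount F n : ℝ) ≤ (n:ℝ) ^ (γ + ε) := by
    rcases Nat.eq_zero_or_pos (gridCount F n) with hN | hN
    · rw [hN]; exact_mod_cast Real.rpow_nonneg hn'.le _
    · have hlt := hN₁ n (le_trans (le_max_left _ _) hn)
      have hlogn : 0 < Real.log n := Real.log_pos hn1
      rw [div_lt_iff₀ hlogn] at hlt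
      have hNpos : (0:ℝ) < (gridCount F n : ℝ) := by exact_mod_cast hN
      calc (gridCount F n : ℝ) = Real.exp (Real.log (gridCount F n)) := (Real.exp_log hNpos).symm
        _ ≤ Real.exp ((γ + ε) * Real.log n) := Real.exp_le_exp.mpr hlt.le
        _ = (n:ℝ) ^ (γ + ε) := by rw [Real.rpow_def_of_pos hn', mul_comm]
  -- the bad set
  set T : Finset (Fin n × Fin n) :=
    Finset.univ.filter (fun ij : Fin n × Fin n => (gridCell n ij.1 ij.2 ∩ F).Nonempty) with hT
  have hTcard : T.card = gridCount F n := by rw [hT, gridCount]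
  set B : Set (ℝ × ℝ) := ⋃ ij ∈ T, gridCell n ij.1 ij.2 with hB
  have hBmeas : MeasurableSet B :=
    T.measurableSet_biUnion (fun ij _ => measurableSet_gridCell n ij.1 ij.2)
  have hBvol : volume B ≤ (T.card : ENNReal) * (ENNReal.ofReal ((n:ℝ)⁻¹) * ENNReal.ofReal ((n:ℝ)⁻¹)) := by
    calc volume B ≤ ∑ ij ∈ T, volume (gridCell n ij.1 ij.2) := measure_biUnion_finset_le T _
      _ = ∑ _ij ∈ T, (ENNReal.ofReal ((n:ℝ)⁻¹) * ENNReal.ofReal ((n:ℝ)⁻¹)) :=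
          Finset.sum_congr rfl (fun ij _ => gridCell_volume hnpos ij.1 ij.2)
      _ = (T.card : ENNReal) * (ENNReal.ofReal ((n:ℝ)⁻¹) * ENNReal.ofReal ((n:ℝ)⁻¹)) := by
          rw [Finset.sum_const, nsmul_eq_mul]
  have hBfin : volume B < ⊤ :=
    lt_of_le_of_lt hBvol (by
      exact ENNReal.mul_lt_top (by simp) (ENNReal.mul_lt_top ENNReal.ofReal_lt_top ENNReal.ofReal_lt_top))
  have hBtoReal : (volume B).toReal ≤ (T.card : ℝ) * ((n:ℝ)⁻¹ * (n:ℝ)⁻¹) := by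
    have := ENNReal.toReal_mono (by
      exact ENNReal.mul_ne_top (by simp) (ENNReal.mul_ne_top ENNReal.ofReal_ne_top ENNReal.ofReal_ne_top)) hBvol
    rw [ENNReal.toReal_mul, ENNReal.toReal_mul,
      ENNReal.toReal_ofReal (by positivity : (0:ℝ) ≤ (n:ℝ)⁻¹)] at this
    simpa using this
  set s : Set (ℝ × ℝ) := Ico (0:ℝ) 1 ×ˢ Ico (0:ℝ) 1 with hs
  have hsmeas : MeasurableSet s := measurableSet_Ico.prod measurableSet_Ico
  have hsvol : volume s ≠ ⊤ := by
    rw [hs, Measure.volume_eq_prod, Measure.prod_prod, Real.volume_Ico]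
    simp
  -- pointwise bound
  have hpt : ∀ z ∈ s, |W z - gridProj n W z| ^ p ≤ B.indicator (fun _ => (1:ℝ)) z := by
    intro z hz
    obtain ⟨i, j, hcell⟩ := exists_gridCell hnpos hz
    rw [gridProj_eq_avg W hcell]
    by_cases hij : (i, j) ∈ T
    · have hzB : z ∈ B := Set.mem_biUnion hij hcell
      rw [indicator_of_mem hzB]
      have havg := avg_mem_Icc hnpos hW hvals i j
      have h1 : |W z - ⨍ y in gridCell n i j, W y| ≤ 1 := by
        rw [abs_le]
        rcases hvals z with h | h <;> rw [h] <;>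
          exact ⟨by linarith [havg.1, havg.2], by linarith [havg.1, havg.2]⟩
      exact Real.rpow_le_one (abs_nonneg _) h1 (by linarith)
    · have hgood : ¬(gridCell n i j ∩ F).Nonempty := by
        rw [hT] at hij; simpa using hij
      have hc : ∀ w ∈ gridCell n i j, W w = W z :=
        fun w hw => W_const_on_good_cell hvals hgood w hw z hcell
      rw [avg_eq_of_const hnpos hc, sub_self, abs_zero,
        Real.zero_rpow (by linarith : p ≠ 0)]
      exact indicator_nonneg (fun _ _ => zero_le_one) z
  -- integrability
  have hfmeas : Measurable (fun z => |W z - gridProj n W z| ^ p) :=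
    ((hW.sub (measurable_gridProj n W)).abs).pow_const p
  have hfint : IntegrableOn (fun z => |W z - gridProj n W z| ^ p) s volume := by
    refine Measure.integrableOn_of_bounded hsvol hfmeas.aestronglyMeasurable (M := 1) ?_
    rw [ae_restrict_iff' hsmeas]
    filter_upwards with z hz
    rw [Real.norm_eq_abs, abs_of_nonneg (Real.rpow_nonneg (abs_nonneg _) _)]
    obtain ⟨i, j, hcell⟩ := exists_gridCell hnpos hz
    rw [gridProj_eq_avg W hcell]
    have havg := avg_mem_Icc hnpos hW hvals i j
    refine Real.rpow_le_one (abs_nonneg _) ?_ (by linarith)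
    rw [abs_le]
    rcases hvals z with h | h <;> rw [h] <;>
      exact ⟨by linarith [havg.1, havg.2], by linarith [havg.1, havg.2]⟩
  have hindint : Integrable (B.indicator (fun _ => (1:ℝ))) volume :=
    (integrable_indicator_iff hBmeas).mpr (integrableOn_const hBfin.ne)
  -- main integral bound
  have hI : (∫ z in s, |W z - gridProj n W z| ^ p ∂volume) ≤ (n:ℝ) ^ (γ + ε - 2) := by
    calc (∫ z in s, |W z - gridProj n W z| ^ p ∂volume)
        ≤ ∫ z in s, B.indicator (fun _ => (1:ℝ)) z ∂volume :=
          setIntegral_mono_on hfint hindint.integrableOn hsmeas hpt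
      _ ≤ ∫ z, B.indicator (fun _ => (1:ℝ)) z ∂volume :=
          setIntegral_le_integral hindint
            (Filter.Eventually.of_forall (fun z => indicator_nonneg (fun _ _ => zero_le_one) z))
      _ = (volume B).toReal := by rw [integral_indicator_const (1:ℝ) hBmeas, smul_eq_mul, mul_one]; rfl
      _ ≤ (T.card : ℝ) * ((n:ℝ)⁻¹ * (n:ℝ)⁻¹) := hBtoReal
      _ ≤ (n:ℝ) ^ (γ + ε) * ((n:ℝ)⁻¹ * (n:ℝ)⁻¹) := by
          apply mul_le_mul_of_nonneg_right _ (by positivity)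
          rw [hTcard]; exact hcount
      _ = (n:ℝ) ^ (γ + ε - 2) := by
          rw [Real.rpow_sub hn', div_eq_mul_inv]
          congr 1
          rw [show (2:ℝ) = ((2:ℕ):ℝ) by norm_num, Real.rpow_natCast, pow_two, mul_inv]
  -- conclude
  have hIpos : 0 ≤ ∫ z in s, |W z - gridProj n W z| ^ p ∂volume :=
    setIntegral_nonneg hsmeas (fun z _ => Real.rpow_nonneg (abs_nonneg _) _)
  calc (∫ z in s, |W z - gridProj n W z| ^ p ∂volume) ^ (1 / p)
      ≤ ((n:ℝ) ^ (γ + ε - 2)) ^ (1 / p) :=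
        Real.rpow_le_rpow hIpos hI (by positivity)
    _ = (n : ℝ) ^ ((-2 + γ + ε) / p) := by
        rw [← Real.rpow_mul hn'.le]
        congr 1
        field_simp
        ring
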